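/- Let (Π^{j,n})_{j∈J} be independent Poisson processes with rates nγ^j, γ^j > 0, let θ > 0, γ_min = min_j γ^j, U = θ/γ_min + 1, and α ∈ (0,1). Define the hitting times τ^j_n = inf{u ≥ 0 : Π^{j,n}_u ≥ nθ}. If n ≥ (2/γ_min)(θ/γ_min + 1) log(10|J|/α), then with probability at least 1 - α, for every j ∈ J: τ^j_n < ∞ and |τ^j_n - θ/γ^j| ≤ √((8/(3nγ_min))(θ/γ_min + 1) log(10|J|/α)) + 1/(nγ_min). -/

import Mathlib

/-!
If the counter `Π^{j,n}` is at least `nθ` at time `θ/γ^j + δ` and (when `θ/γ^j - δ > 0`) below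
`nθ` at time `θ/γ^j - δ`, then monotonicity of the paths puts the hitting time within `δ` of
`θ/γ^j`. Both failures are tail events of a single Poisson variable, of mean `nθ ± nγ^j δ`,
and the Chernoff bound at the optimal exponent gives `exp (-(nγ^j δ)² / (2 (nθ + nγ^j δ)))` for
each. The choice of `δ` and the lower bound on `n` make this exponent at least
`log (10|J|/α)`, and a union bound over the `2|J|` events finishes the proof.
-/

open MeasureTheory ProbabilityTheory Real

/-- A homogeneous Poisson (counting) process with rate `r` under the probability
measure `P`: starts at `0`, has monotone paths, Poisson-distributed increments
`N_t - N_s ~ Poisson(r(t-s))`, and independent increments. -/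
def IsPoissonProcess {Ω : Type*} [MeasurableSpace Ω] (P : Measure Ω)
    (N : ℝ → Ω → ℕ) (r : ℝ) : Prop :=
  (∀ ω, N 0 ω = 0) ∧
  (∀ t, Measurable (N t)) ∧
  (∀ ω, Monotone fun t => N t ω) ∧
  (∀ s t : ℝ, 0 ≤ s → s ≤ t →
      Measure.map (fun ω => N t ω - N s ω) P
        = (poissonPMF (r * (t - s)).toNNReal).toMeasure) ∧
  (∀ (n : ℕ) (ts : ℕ → ℝ), Monotone ts → (∀ i, 0 ≤ ts i) →
      iIndepFun
        (fun i : Fin n => fun ω => N (ts (i + 1)) ω - N (ts i) ω) P)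

open scoped ENNReal NNReal Nat

-- The Chernoff exponent of `Po(r)` at level `a`, attained at `t = log (a / r)`.
noncomputable def poissonRateFunction (r a : ℝ) : ℝ := a * log (a / r) - a + r

lemma sq_sub_div_two_mul_le_poissonRateFunction_of_le {r a : ℝ} (hr : 0 < r) (hra : r ≤ a) :
    (a - r) ^ 2 / (2 * a) ≤ poissonRateFunction r a := by
  have ha : 0 < a := hr.trans_le hra
  have hlog : 2 * (a - r) / (a + r) ≤ log (a / r) := by
    have := le_log_one_add_of_nonneg (x := a / r - 1) (sub_nonneg.2 ((one_le_div hr).2 hra))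
    rw [add_sub_cancel] at this
    calc 2 * (a - r) / (a + r) = 2 * (a / r - 1) / (a / r - 1 + 2) := by
          rw [div_sub_one hr.ne', div_add' _ _ _ hr.ne', mul_div_assoc',
            div_div_div_cancel_right₀ hr.ne']
          ring
      _ ≤ log (a / r) := this
  calc (a - r) ^ 2 / (2 * a) ≤ (a - r) ^ 2 / (a + r) := by gcongr; linarith
    _ = a * (2 * (a - r) / (a + r)) - a + r := by field_simp; ring
    _ ≤ poissonRateFunction r a := by unfold poissonRateFunction; gcongr

lemma sq_sub_div_two_mul_le_poissonRateFunction_of_ge {r a : ℝ} (ha : 0 < a) (har : a ≤ r) :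
    (r - a) ^ 2 / (2 * r) ≤ poissonRateFunction r a := by
  have hr := ha.trans_le har
  have hlog : log (r / a) ≤ (r / a - (r / a)⁻¹) / 2 := by
    rw [← sinh_log (by positivity)]
    exact self_le_sinh_iff.2 (log_nonneg ((one_le_div ha).2 har))
  rw [poissonRateFunction, show log (a / r) = -log (r / a) by rw [← log_inv, inv_div]]
  calc (r - a) ^ 2 / (2 * r) = -(a * ((r / a - (r / a)⁻¹) / 2)) - a + r := by field_simp; ring
    _ ≤ _ := by rw [mul_neg]; gcongr

lemma hasSum_exp_mul_poissonMeasure (r : ℝ≥0) (t : ℝ) :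
    HasSum (fun n : ℕ => exp (-r) * r ^ n / n ! * exp (t * n)) (exp (r * (exp t - 1))) := by
  have h := (NormedSpace.expSeries_div_hasSum_exp ((r : ℝ) * exp t)).mul_left (exp (-r))
  rw [← exp_eq_exp_ℝ, ← exp_add] at h
  have hterm : (fun n : ℕ => exp (-r) * r ^ n / n ! * exp (t * n)) =
      fun n : ℕ => exp (-r) * ((r * exp t) ^ n / n !) := by
    funext n
    rw [mul_pow, ← exp_nat_mul, mul_comm t]
    ring
  rw [hterm, show (r : ℝ) * (exp t - 1) = -r + r * exp t by ring]
  exact h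

lemma integrable_exp_mul_poissonMeasure (r : ℝ≥0) (t : ℝ) :
    Integrable (fun n : ℕ => exp (t * n)) Po(r) := by
  rw [integrable_poissonMeasure_iff]
  simpa only [norm_eq_abs, abs_exp] using (hasSum_exp_mul_poissonMeasure r t).summable

lemma mgf_poissonMeasure (r : ℝ≥0) (t : ℝ) :
    mgf (fun n : ℕ => (n : ℝ)) Po(r) t = exp (r * (exp t - 1)) := by
  rw [mgf, integral_poissonMeasure]
  exact (hasSum_exp_mul_poissonMeasure r t).tsum_eq

lemma poissonMeasure_real_ge_le {r : ℝ≥0} {a : ℝ} (hr : 0 < r) (hra : r ≤ a) :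
    Po(r).real {n : ℕ | a ≤ n} ≤ exp (-((a - r) ^ 2 / (2 * a))) := by
  have ha : 0 < a := lt_of_lt_of_le (by exact_mod_cast hr) hra
  calc Po(r).real {n : ℕ | a ≤ n}
      ≤ exp (-log (a / r) * a) * mgf (fun n : ℕ => (n : ℝ)) Po(r) (log (a / r)) :=
        measure_ge_le_exp_mul_mgf a (log_nonneg ((one_le_div (by exact_mod_cast hr)).2 hra))
          (integrable_exp_mul_poissonMeasure r _)
    _ = exp (-poissonRateFunction r a) := by
        rw [mgf_poissonMeasure, exp_log (by positivity), ← exp_add, poissonRateFunction]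
        congr 1
        field_simp
        ring
    _ ≤ exp (-((a - r) ^ 2 / (2 * a))) := by
        gcongr
        exact sq_sub_div_two_mul_le_poissonRateFunction_of_le (by exact_mod_cast hr) hra

lemma poissonMeasure_real_le_le {r : ℝ≥0} {a : ℝ} (ha : 0 < a) (har : a ≤ r) :
    Po(r).real {n : ℕ | n ≤ a} ≤ exp (-((r - a) ^ 2 / (2 * r))) := by
  have hr : (0 : ℝ) < r := ha.trans_le har
  calc Po(r).real {n : ℕ | n ≤ a}
      ≤ exp (-log (a / r) * a) * mgf (fun n : ℕ => (n : ℝ)) Po(r) (log (a / r)) :=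
        measure_le_le_exp_mul_mgf a (log_nonpos (by positivity) ((div_le_one hr).2 har))
          (integrable_exp_mul_poissonMeasure r _)
    _ = exp (-poissonRateFunction r a) := by
        rw [mgf_poissonMeasure, exp_log (by positivity), ← exp_add, poissonRateFunction]
        congr 1
        field_simp
        ring
    _ ≤ exp (-((r - a) ^ 2 / (2 * r))) := by
        gcongr
        exact sq_sub_div_two_mul_le_poissonRateFunction_of_ge ha har

lemma poissonPMF_toMeasure (r : ℝ≥0) : (poissonPMF r).toMeasure = Po(r) :=
  Measure.ext_of_singleton fun n => by
    rw [PMF.toMeasure_apply_singleton _ _ (measurableSet_singleton n), poissonMeasure_singleton]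
    rfl

lemma le_sq_div_two_mul_add {A B L S x : ℝ} (hA : 0 ≤ A) (hB : 0 < B) (hL : 0 < L)
    (hBL : 2 * (A + B) * L ≤ B ^ 2) (hS0 : 0 ≤ S) (hS : S ^ 2 = 8 / 3 * (A + B) * L)
    (hSx : S ≤ x) : L ≤ x ^ 2 / (2 * (A + x)) := by
  have hSB : S ≤ 4 / 3 * B := by nlinarith
  have hLB : 2 * L ≤ B := by nlinarith
  have hLS : 2 * L ≤ S := by nlinarith
  rw [le_div_iff₀ (by linarith)]
  nlinarith

lemma le_sq_div_of_mul_sqrt_le {n c θ L x : ℝ} (hc : 0 < c) (hθ : 0 ≤ θ) (hL : 0 < L)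
    (hn0 : 0 < n) (hn : 2 / c * (θ / c + 1) * L ≤ n)
    (hx : n * c * √(8 / (3 * n * c) * (θ / c + 1) * L) ≤ x) :
    L ≤ x ^ 2 / (2 * (n * θ + x)) := by
  refine le_sq_div_two_mul_add (A := n * θ) (B := n * c) (by positivity) (by positivity) hL ?_
    (by positivity) ?_ hx
  · calc 2 * (n * θ + n * c) * L = 2 / c * (θ / c + 1) * L * (n * c ^ 2) := by
          field_simp
      _ ≤ n * (n * c ^ 2) := by gcongr
      _ = (n * c) ^ 2 := by ring
  · rw [mul_pow, sq_sqrt (by positivity)]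
    field_simp

noncomputable def hittingDeviation (n c θ L : ℝ) : ℝ :=
  √(8 / (3 * n * c) * (θ / c + 1) * L) + 1 / (n * c)

namespace IsPoissonProcess

variable {Ω : Type*} [MeasurableSpace Ω] {P : Measure Ω} {N : ℝ → Ω → ℕ} {ρ : ℝ}

lemma measure_preimage (hN : IsPoissonProcess P N ρ) {t : ℝ} (ht : 0 ≤ t) (S : Set ℕ) :
    P (N t ⁻¹' S) = Po((ρ * t).toNNReal) S := by
  obtain ⟨hzero, hmeas, -, hlaw, -⟩ := hN
  have hlaw_t := hlaw 0 t le_rfl ht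
  simp only [hzero, Nat.sub_zero, sub_zero, poissonPMF_toMeasure] at hlaw_t
  rw [← hlaw_t, Measure.map_apply (hmeas t) .of_discrete]

lemma measure_not_reached_le (hN : IsPoissonProcess P N ρ) (hρ : 0 < ρ) {a δ : ℝ} (ha : 0 < a)
    (hδ : 0 ≤ δ) :
    P {ω | (N (a / ρ + δ) ω : ℝ) ≤ a} ≤
      ENNReal.ofReal (exp (-((ρ * δ) ^ 2 / (2 * (a + ρ * δ))))) := by
  have hmean : ((ρ * (a / ρ + δ)).toNNReal : ℝ) = a + ρ * δ := by
    rw [Real.coe_toNNReal _ (by positivity)]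
    field_simp
  have htail := poissonMeasure_real_le_le ha (hmean ▸ le_add_of_nonneg_right (by positivity))
  rw [hmean, add_sub_cancel_left] at htail
  rw [show {ω | (N (a / ρ + δ) ω : ℝ) ≤ a} = N (a / ρ + δ) ⁻¹' {n | (n : ℝ) ≤ a} from rfl,
    hN.measure_preimage (by positivity), ← ofReal_measureReal]
  exact ENNReal.ofReal_le_ofReal htail

lemma measure_reached_early_le (hN : IsPoissonProcess P N ρ) (hρ : 0 < ρ) {a δ : ℝ} (hδ : 0 ≤ δ)
    (hearly : 0 < a / ρ - δ) :
    P {ω | a ≤ (N (a / ρ - δ) ω : ℝ)} ≤ ENNReal.ofReal (exp (-((ρ * δ) ^ 2 / (2 * a)))) := by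
  have hmean : ((ρ * (a / ρ - δ)).toNNReal : ℝ) = a - ρ * δ := by
    rw [Real.coe_toNNReal _ (by positivity)]
    field_simp
  have hpos : 0 < a - ρ * δ := by rw [← hmean]; positivity
  have htail := poissonMeasure_real_ge_le (by rwa [← NNReal.coe_pos, hmean])
    (hmean ▸ sub_le_self a (by positivity))
  rw [hmean, sub_sub_cancel] at htail
  rw [show {ω | a ≤ (N (a / ρ - δ) ω : ℝ)} = N (a / ρ - δ) ⁻¹' {n | a ≤ (n : ℝ)} from rfl,
    hN.measure_preimage hearly.le, ← ofReal_measureReal]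
  exact ENNReal.ofReal_le_ofReal htail

lemma measure_not_crossed_within_le (hN : IsPoissonProcess P N ρ) (hρ : 0 < ρ) {a δ : ℝ}
    (ha : 0 < a) (hδ : 0 ≤ δ) :
    P {ω | ¬ (a ≤ N (a / ρ + δ) ω ∧ (0 < a / ρ - δ → (N (a / ρ - δ) ω : ℝ) < a))} ≤
      2 * ENNReal.ofReal (exp (-((ρ * δ) ^ 2 / (2 * (a + ρ * δ))))) := by
  set ε := ENNReal.ofReal (exp (-((ρ * δ) ^ 2 / (2 * (a + ρ * δ)))))
  have hlate := hN.measure_not_reached_le hρ ha hδ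
  have hearly : P {ω | 0 < a / ρ - δ ∧ a ≤ (N (a / ρ - δ) ω : ℝ)} ≤ ε := by
    by_cases h : 0 < a / ρ - δ
    · refine (measure_mono fun ω hω => hω.2).trans
        ((hN.measure_reached_early_le hρ hδ h).trans ?_)
      exact ENNReal.ofReal_le_ofReal <| exp_le_exp.2 <| neg_le_neg <|
        div_le_div_of_nonneg_left (sq_nonneg _) (by positivity) (by nlinarith)
    · simp [h]
  calc _ ≤ P ({ω | (N (a / ρ + δ) ω : ℝ) ≤ a} ∪
          {ω | 0 < a / ρ - δ ∧ a ≤ (N (a / ρ - δ) ω : ℝ)}) := by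
        refine measure_mono fun ω hω => ?_
        simp only [Set.mem_setOf_eq, Set.mem_union, not_and_or, not_le, not_lt,
          _root_.not_imp] at hω ⊢
        exact hω.imp le_of_lt id
    _ ≤ ε + ε := (measure_union_le _ _).trans (add_le_add hlate hearly)
    _ = 2 * ε := (two_mul ε).symm

lemma measure_not_crossed_near_le {n γ c θ L : ℝ}
    (hN : IsPoissonProcess P N (n * γ)) (hc : 0 < c) (hcγ : c ≤ γ) (hθ : 0 < θ) (hL : 0 < L)
    (hn0 : 0 < n) (hn : 2 / c * (θ / c + 1) * L ≤ n) :
    P {ω | ¬ (n * θ ≤ N (θ / γ + hittingDeviation n c θ L) ω ∧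
        (0 < θ / γ - hittingDeviation n c θ L →
          (N (θ / γ - hittingDeviation n c θ L) ω : ℝ) < n * θ))} ≤
      2 * ENNReal.ofReal (exp (-L)) := by
  set δ := hittingDeviation n c θ L
  have hγ : 0 < γ := hc.trans_le hcγ
  have hδ : 0 ≤ δ := by unfold δ hittingDeviation; positivity
  have htime : n * θ / (n * γ) = θ / γ := mul_div_mul_left _ _ hn0.ne'
  have hexponent : L ≤ (n * γ * δ) ^ 2 / (2 * (n * θ + n * γ * δ)) := by
    refine le_sq_div_of_mul_sqrt_le hc hθ.le hL hn0 hn ?_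
    calc _ ≤ n * c * δ := by gcongr; exact le_add_of_nonneg_right (by positivity)
      _ ≤ n * γ * δ := by gcongr
  calc _ ≤ 2 * ENNReal.ofReal (exp (-((n * γ * δ) ^ 2 / (2 * (n * θ + n * γ * δ))))) :=
        htime ▸ hN.measure_not_crossed_within_le (by positivity) (by positivity) hδ
    _ ≤ 2 * ENNReal.ofReal (exp (-L)) := by gcongr

end IsPoissonProcess

lemma abs_sInf_crossing_sub_le {f : ℝ → ℝ} (hf : Monotone f) {a t δ : ℝ} (h0 : 0 ≤ t + δ)
    (hlate : a ≤ f (t + δ)) (hearly : 0 < t - δ → f (t - δ) < a) :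
    |sInf {u | 0 ≤ u ∧ a ≤ f u} - t| ≤ δ := by
  have hmem : t + δ ∈ {u | 0 ≤ u ∧ a ≤ f u} := ⟨h0, hlate⟩
  have hle : sInf {u | 0 ≤ u ∧ a ≤ f u} ≤ t + δ := csInf_le ⟨0, fun u hu => hu.1⟩ hmem
  have hge : t - δ ≤ sInf {u | 0 ≤ u ∧ a ≤ f u} := by
    refine le_csInf ⟨_, hmem⟩ fun u ⟨hu0, hu⟩ => ?_
    by_contra! hlt
    exact (hearly (hu0.trans_lt hlt)).not_ge (hu.trans (hf hlt.le))
  rw [abs_sub_le_iff]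
  constructor <;> linarith

lemma one_sub_card_mul_le_measure_iInter {Ω ι : Type*} [MeasurableSpace Ω] {P : Measure Ω}
    [IsProbabilityMeasure P] [Fintype ι] {A : ι → Set Ω} {ε : ℝ≥0∞} (hA : ∀ i, P (A i)ᶜ ≤ ε) :
    1 - Fintype.card ι * ε ≤ P (⋂ i, A i) := by
  have hunion : P (⋃ i, (A i)ᶜ) ≤ Fintype.card ι * ε :=
    (measure_iUnion_fintype_le P _).trans <|
      (Finset.sum_le_sum fun i _ => hA i).trans_eq (by simp)
  rw [tsub_le_iff_right]
  calc 1 = P Set.univ := measure_univ.symm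
    _ ≤ P (⋂ i, A i) + P (⋂ i, A i)ᶜ := measure_univ_le_add_compl _
    _ ≤ P (⋂ i, A i) + Fintype.card ι * ε := by
        rw [Set.compl_iInter]
        gcongr

theorem poisson_hitting_times_general
    {Ω : Type*} [MeasurableSpace Ω] (P : Measure Ω) [IsProbabilityMeasure P]
    (J : Type*) [Fintype J] [Nonempty J]
    (γ : J → ℝ) (hγ : ∀ j, 0 < γ j) (θ α : ℝ) (hθ : 0 < θ)
    (hα : α ∈ Set.Ioo (0 : ℝ) 1)
    (n : ℕ)
    (N : J → ℝ → Ω → ℕ) (hN : ∀ j, IsPoissonProcess P (N j) (n * γ j))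
    (hn : 2 / (⨅ k, γ k) * (θ / (⨅ k, γ k) + 1) *
        Real.log (10 * (Fintype.card J : ℝ) / α) ≤ (n : ℝ)) :
    1 - ENNReal.ofReal α ≤
      P {ω | ∀ j,
          (∃ u : ℝ, 0 ≤ u ∧ (n : ℝ) * θ ≤ (N j u ω : ℝ)) ∧
          |sInf {u : ℝ | 0 ≤ u ∧ (n : ℝ) * θ ≤ (N j u ω : ℝ)} - θ / γ j| ≤
            Real.sqrt (8 / (3 * n * (⨅ k, γ k)) * (θ / (⨅ k, γ k) + 1) *
              Real.log (10 * (Fintype.card J : ℝ) / α)) +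
            1 / (n * (⨅ k, γ k))} := by
  obtain ⟨hα0, hα1⟩ := hα
  set c := ⨅ k, γ k
  have hc : 0 < c := (Finite.exists_min γ).elim fun j hj => (hγ j).trans_le (le_ciInf hj)
  have hJ : (1 : ℝ) ≤ Fintype.card J := by exact_mod_cast Fintype.card_pos
  set L := log (10 * (Fintype.card J : ℝ) / α)
  have hL : 0 < L := log_pos (by rw [lt_div_iff₀ hα0]; linarith)
  have hexpL : exp (-L) = α / (10 * Fintype.card J) := by
    rw [exp_neg, exp_log (by positivity), inv_div]
  have hn0 : (0 : ℝ) < n := lt_of_lt_of_le (by positivity) hn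
  have hnear j := hexpL ▸ (hN j).measure_not_crossed_near_le hc
    (ciInf_le (Set.finite_range γ).bddBelow j) hθ hL hn0 hn
  refine (tsub_le_tsub_left ?_ 1).trans ((one_sub_card_mul_le_measure_iInter hnear).trans
    (measure_mono fun ω hω j => ?_))
  · calc (Fintype.card J : ℝ≥0∞) * (2 * ENNReal.ofReal (α / (10 * Fintype.card J)))
          = ENNReal.ofReal (Fintype.card J * (2 * (α / (10 * Fintype.card J)))) := by
            rw [ENNReal.ofReal_mul (by positivity), ENNReal.ofReal_mul zero_le_two,
              ENNReal.ofReal_natCast, ENNReal.ofReal_ofNat]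
      _ ≤ ENNReal.ofReal α := ENNReal.ofReal_le_ofReal (by field_simp; linarith)
  · obtain ⟨hlate, hearly⟩ := Set.mem_iInter.1 hω j
    obtain ⟨-, -, hmono, -, -⟩ := hN j
    have hlate_pos : 0 ≤ θ / γ j + hittingDeviation n c θ L := by
      have := hγ j
      unfold hittingDeviation
      positivity
    exact ⟨⟨_, hlate_pos, hlate⟩,
      abs_sInf_crossing_sub_le (Nat.mono_cast.comp (hmono ω)) hlate_pos hlate hearly⟩

/-- **hitting times of the rescaled Poisson counter model.** For
independent Poisson processes `Π^{j,n}` with rates `nγ^j`, threshold `nθ`, and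
`n ≥ (2/γ_min)(θ/γ_min + 1) log(10|J|/α)`, with probability at least `1 - α` every
hitting time `τ^j_n = inf{u ≥ 0 : Π^{j,n}_u ≥ nθ}` is finite and satisfies
`|τ^j_n - θ/γ^j| ≤ √((8/(3nγ_min))(θ/γ_min + 1) log(10|J|/α)) + 1/(nγ_min)`. -/
theorem poisson_hitting_times
    {Ω : Type*} [MeasurableSpace Ω] (P : Measure Ω) [IsProbabilityMeasure P]
    (J : Type*) [Fintype J] [Nonempty J]
    (γ : J → ℝ) (hγ : ∀ j, 0 < γ j) (θ α : ℝ) (hθ : 0 < θ)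
    (hα : α ∈ Set.Ioo (0 : ℝ) 1)
    (n : ℕ)
    (N : J → ℝ → Ω → ℕ) (hN : ∀ j, IsPoissonProcess P (N j) (n * γ j))
    (hindep : iIndepFun (fun j ω => fun t => N j t ω) P)
    (hn : 2 / (⨅ k, γ k) * (θ / (⨅ k, γ k) + 1) *
        Real.log (10 * (Fintype.card J : ℝ) / α) ≤ (n : ℝ)) :
    1 - ENNReal.ofReal α ≤
      P {ω | ∀ j,
          (∃ u : ℝ, 0 ≤ u ∧ (n : ℝ) * θ ≤ (N j u ω : ℝ)) ∧
          |sInf {u : ℝ | 0 ≤ u ∧ (n : ℝ) * θ ≤ (N j u ω : ℝ)} - θ / γ j| ≤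
            Real.sqrt (8 / (3 * n * (⨅ k, γ k)) * (θ / (⨅ k, γ k) + 1) *
              Real.log (10 * (Fintype.card J : ℝ) / α)) +
            1 / (n * (⨅ k, γ k))} :=
  poisson_hitting_times_general P J γ hγ θ α hθ hα n N hN hn
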